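/- arXiv:2502.01072 — 3 statements merged into one kernel-verified Lean document; each statement's English description precedes it below -/
import Mathlib

section
/- Let n ≥ 2 be an integer and let c be a nonzero integer with c ≠ 1 such that n(n+1)²/(2c) = n + (n-1)n²/(2(c-1)), i.e. c and c-1 divide the respective numerators and the equation n(n+1)²(c-1) = 2nc(c-1) + (n-1)n²c holds. Then c = n+1 or 2c = n+1. -/
/-- The key Diophantine step in Proposition 3.3: if `n ≥ 2`, `c ≠ 0`, `c ≠ 1` and
`n(n+1)²(c-1) = 2nc(c-1) + (n-1)n²c` (the cleared-denominator form of
`n(n+1)²/(2c) = n + (n-1)n²/(2(c-1))`), then `c = n+1` or `2c = n+1`. -/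
theorem stmt0 (n : ℤ) (hn : 2 ≤ n) (c : ℤ) (hc0 : c ≠ 0) (hc1 : c ≠ 1)
    (heq : n * (n + 1) ^ 2 * (c - 1) = 2 * n * c * (c - 1) + (n - 1) * n ^ 2 * c) :
    c = n + 1 ∨ 2 * c = n + 1 := by
  have hn0 : n ≠ 0 := by omega
  have h : (c - (n + 1)) * (2 * c - (n + 1)) = 0 := by
    apply mul_left_cancel₀ hn0
    linear_combination -heq
  rcases mul_eq_zero.mp h with h | h
  · left; omega
  · right; omega
end

section
/- For n = 5, there exist no integers (a₁,...,a₄, b₁,...,b₃) with a₁ = 3, satisfying a_i = b_i + b_{i-1} (with b₀ = 1, b₄ = 5 the Euler number of the 4-dimensional divisor, a₅ = 6), a₁·a₄ = 90, b₁·b₃ = 50, together with the two additional constraints (a₁² + 3a₂)a₃ - (a₁³ - 3a₁a₂ + 3a₃)a₂ = (36+30)·20 - (216 - 270 + 60)·15 and (b₁² + 3b₂)b₂ - (b₁³ - 3b₁b₂ + 3b₃)b₁ = (25+30)·10 - (125 - 150 + 30)·5, where the right-hand sides are the corresponding values for ℙ⁵ and ℙ⁴ with c_i(ℙ⁵) =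 C(6,i), c_i(ℙ⁴) = C(5,i). -/
/-- For `n = 5`, the system of Chern-number equations coming from equality of Hodge numbers
with `ℙ⁵` and `ℙ⁴` has no integer solution with `a₁ = c₁(M) = 3 = (n+1)/2`.
Here `a_i = c_i(M)`, `b_i = c_i(D)` as integers, `b₀ = 1`, `b₄ = c₄(D) = 5`, `a₅ = c₅(M) = 6`. -/
theorem stmt10 : ¬ ∃ (a1 a2 a3 a4 a5 b1 b2 b3 : ℤ),
    a1 = 3 ∧ a5 = 6 ∧
    a1 = b1 + 1 ∧ a2 = b2 + b1 ∧ a3 = b3 + b2 ∧ a4 = 5 + b3 ∧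
    a1 * a4 = 90 ∧ b1 * b3 = 50 ∧
    (a1 ^ 2 + 3 * a2) * a3 - (a1 ^ 3 - 3 * a1 * a2 + 3 * a3) * a2
      = (36 + 30) * 20 - (216 - 270 + 60) * 15 ∧
    (b1 ^ 2 + 3 * b2) * b2 - (b1 ^ 3 - 3 * b1 * b2 + 3 * b3) * b1
      = (25 + 30) * 10 - (125 - 150 + 30) * 5 := by
  rintro ⟨a1, a2, a3, a4, a5, b1, b2, b3, h1, h5, e1, e2, e3, e4, h14, h13, hA, hB⟩
  have hb1 : b1 = 2 := by omega
  have hb3 : b3 = 25 := by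
    subst hb1 h1; omega
  subst hb1 hb3
  -- hB becomes a quadratic in b2 with no integer root
  have hq : (3 * b2 + 8) ^ 2 = 2137 := by ring_nf; ring_nf at hB; linarith
  have h : 3 * b2 + 8 ≤ -47 ∨ (-46 ≤ 3 * b2 + 8 ∧ 3 * b2 + 8 ≤ 46) ∨ 47 ≤ 3 * b2 + 8 := by
    omega
  rcases h with h | ⟨hl, hr⟩ | h
  · nlinarith
  · nlinarith
  · nlinarith
end

section
/- Let n ≥ 2. Suppose integers a, b satisfy a·(n + b) = n(n+1)²/2 and (a - 1)·b = (n-1)n²/2 with a ≠ 0 and a ≠ 1. Then a = n+1 with b = n(n-1)/2, or a = (n+1)/2 with b = n². -/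
/-- Complete solution of the Diophantine system of Section 3: if `n ≥ 2` and integers
`a = c₁(M)`, `b = c_{n-2}(D)` satisfy `a(n+b) = n(n+1)²/2` and `(a-1)b = (n-1)n²/2`
with `a ≠ 0`, `a ≠ 1`, then either `a = n+1` with `b = n(n-1)/2`, or `a = (n+1)/2`
with `b = n²`. -/
theorem stmt19 (n : ℤ) (hn : 2 ≤ n) (a b : ℤ) (ha0 : a ≠ 0) (ha1 : a ≠ 1)
    (h1 : 2 * (a * (n + b)) = n * (n + 1) ^ 2)
    (h2 : 2 * ((a - 1) * b) = (n - 1) * n ^ 2) :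
    (a = n + 1 ∧ 2 * b = n * (n - 1)) ∨ (2 * a = n + 1 ∧ b = n ^ 2) := by
  have h3 : 2 * b = n * (3 * n + 1 - 2 * a) := by linear_combination h1 - h2
  have hn0 : n ≠ 0 := by omega
  have h4 : n * ((2 * a - (n + 1)) * (a - (n + 1))) = 0 := by
    linear_combination (a - 1) * h3 - h2
  have h5 : (2 * a - (n + 1)) * (a - (n + 1)) = 0 := by
    rcases mul_eq_zero.mp h4 with h | h
    · exact absurd h hn0
    · exact h
  rcases mul_eq_zero.mp h5 with h | h
  · right
    have ha : 2 * a = n + 1 := by linarith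
    refine ⟨ha, ?_⟩
    have : 2 * b = 2 * n ^ 2 := by linear_combination h3 - n * ha
    linarith
  · left
    have ha : a = n + 1 := by linarith
    exact ⟨ha, by linear_combination h3 - 2 * n * ha⟩
end
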